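/- arXiv:0912.4635 — 6 statements merged into one kernel-verified Lean document; each statement's English description precedes it below -/
import Mathlib

section
/- Let Λ be a finitely-aligned k-graph. For (λ,F), (μ,G) with F ⊆ s(λ)Λ and G ⊆ s(μ)Λ finite, the intersection (D_λ \ D_{λF}) ∩ (D_μ \ D_{μG}) equals the disjoint union over (α,β) ∈ Λ^min(λ,μ) of the sets D_{λα} \ D_{λα F_α}, where F_α = (⋃_{ν∈F} F(λα, λν)) ∪ (⋃_{ξ∈G} F(λα, μξ)) and F(λ,μ) := Ext(λ;{μ}). -/
open scoped ENNReal ComplexConjugate ZeroAtInfty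
open Classical

/-- A `k`-graph: a countable category `Λ` with degree functor `d : Λ → ℕ^k`
satisfying the unique factorisation property.  Vertices are the objects,
`P` is the set of morphisms (paths), `comp` is composition (meaningful when
`s a = r b`). -/
structure KGraph (k : ℕ) where
  V : Type
  P : Type
  r : P → V
  s : P → V
  d : P → Fin k → ℕ
  comp : P → P → P
  r_comp : ∀ a b, s a = r b → r (comp a b) = r a
  s_comp : ∀ a b, s a = r b → s (comp a b) = s b
  d_comp : ∀ a b, s a = r b → d (comp a b) = d a + d b
  comp_assoc : ∀ a b c, s a = r b → s b = r c →
    comp (comp a b) c = comp a (comp b c)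
  vtx : V → P
  r_vtx : ∀ v, r (vtx v) = v
  s_vtx : ∀ v, s (vtx v) = v
  d_vtx : ∀ v, d (vtx v) = 0
  comp_vtx : ∀ a, comp a (vtx (s a)) = a
  vtx_comp : ∀ a, comp (vtx (r a)) a = a
  /-- unique factorisation property -/
  factor : ∀ (lam : P) (m n : Fin k → ℕ), d lam = m + n →
    ∃! mn : P × P, s mn.1 = r mn.2 ∧ d mn.1 = m ∧ d mn.2 = n ∧
      lam = comp mn.1 mn.2
  countableP : Countable P

namespace KGraph

variable {k : ℕ} (G : KGraph k)

/-- `Λ^min(λ,μ) = {(α,β) : λα = μβ, d(λα) = d(λ) ∨ d(μ)}`. -/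
def Lmin (lam mu : G.P) : Set (G.P × G.P) :=
  {p | G.s lam = G.r p.1 ∧ G.s mu = G.r p.2 ∧
    G.comp lam p.1 = G.comp mu p.2 ∧
    G.d lam + G.d p.1 = G.d lam ⊔ G.d mu}

def FinitelyAligned : Prop := ∀ lam mu : G.P, (G.Lmin lam mu).Finite

/-- `Ext(λ;E) = {α : (α,β) ∈ Λ^min(λ,ν) for some ν ∈ E, β}`. -/
def Ext (lam : G.P) (E : Set G.P) : Set G.P :=
  {a | ∃ ν ∈ E, ∃ b, (a, b) ∈ G.Lmin lam ν}

/-- `E ⊆ vΛ` is exhaustive if every `μ ∈ vΛ` has a minimal common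
extension with some element of `E`. -/
def Exhaustive (v : G.V) (E : Set G.P) : Prop :=
  (∀ lam ∈ E, G.r lam = v) ∧
    ∀ mu, G.r mu = v → ∃ lam ∈ E, (G.Lmin lam mu).Nonempty

/-- `λ` extends `μ`: `λ = μλ'` for some `λ'`. -/
def Extends (lam mu : G.P) : Prop :=
  ∃ lam', G.s mu = G.r lam' ∧ lam = G.comp mu lam'

/-- A graph morphism `x : Ω_{k,m} → Λ`: `deg = m ∈ (ℕ∪{∞})^k` and
`seg p q = x(p,q)` for `p ≤ q ≤ m`. -/
structure GM (G : KGraph k) where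
  deg : Fin k → ℕ∞
  seg : (Fin k → ℕ) → (Fin k → ℕ) → G.P
  d_seg : ∀ p q : Fin k → ℕ, p ≤ q → (∀ i, (q i : ℕ∞) ≤ deg i) →
    G.d (seg p q) = q - p
  comp_seg : ∀ p q r : Fin k → ℕ, p ≤ q → q ≤ r →
    (∀ i, (r i : ℕ∞) ≤ deg i) → seg p r = G.comp (seg p q) (seg q r)
  s_seg : ∀ p q r : Fin k → ℕ, p ≤ q → q ≤ r →
    (∀ i, (r i : ℕ∞) ≤ deg i) → G.s (seg p q) = G.r (seg q r)

/-- The boundary condition on a graph morphism. -/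
def IsBoundary (x : GM G) : Prop :=
  ∀ n : Fin k → ℕ, (∀ i, (n i : ℕ∞) ≤ x.deg i) →
    ∀ E : Set G.P, E.Finite → G.Exhaustive (G.r (x.seg n n)) E →
      ∃ lam ∈ E, (∀ i, ((n i + G.d lam i : ℕ) : ℕ∞) ≤ x.deg i) ∧
        x.seg n (n + G.d lam) = lam

/-- The boundary-path space `∂Λ`. -/
def BPath (G : KGraph k) := {x : GM G // G.IsBoundary x}

/-- `D_λ = {x ∈ ∂Λ : x(0,d(λ)) = λ}`. -/
def DSet (lam : G.P) : Set (BPath G) :=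
  {x | (∀ i, (G.d lam i : ℕ∞) ≤ x.1.deg i) ∧ x.1.seg 0 (G.d lam) = lam}

/-- `D_{λF} = ⋃_{ν ∈ F} D_{λν}`. -/
def DFSet (lam : G.P) (F : Set G.P) : Set (BPath G) :=
  ⋃ ν ∈ F, G.DSet (G.comp lam ν)

/-- The basic open sets `D_λ \ D_{λF}` of the topology on `∂Λ`. -/
def basicSets : Set (Set (BPath G)) :=
  {U | ∃ (lam : G.P) (F : Set G.P), F.Finite ∧
    (∀ ν ∈ F, G.r ν = G.s lam) ∧ U = G.DSet lam \ G.DFSet lam F}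

instance : TopologicalSpace (BPath G) :=
  TopologicalSpace.generateFrom (G.basicSets)

/-- `∂Λ^{≥n}`. -/
def geSet (n : Fin k → ℕ) : Set (BPath G) :=
  {x | ∀ i, (n i : ℕ∞) ≤ x.1.deg i}

/-- `ShiftEq n x y` says `d(x) ≥ n` and `σ_n(x) = y`. -/
def ShiftEq (n : Fin k → ℕ) (x y : BPath G) : Prop :=
  x ∈ G.geSet n ∧ (∀ i, y.1.deg i = x.1.deg i - (n i : ℕ∞)) ∧
    ∀ p q : Fin k → ℕ, p ≤ q → (∀ i, (q i : ℕ∞) ≤ y.1.deg i) →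
      y.1.seg p q = x.1.seg (p + n) (q + n)

/-- `σ : ∂Λ^{≥n} → ∂Λ` is the shift map `σ_n`. -/
def IsShift (n : Fin k → ℕ) (σ : G.geSet n → BPath G) : Prop :=
  ∀ x, G.ShiftEq n x.1 (σ x)

/-- Condition `K(i)` for the pair `(λ,F)`. -/
def ConditionK (i : Fin k) (lam : G.P) (F : Set G.P) : Prop :=
  ∀ mu, G.r mu = G.s lam → 1 ≤ G.d mu i →
    ∃ ν ∈ F, G.DSet mu ⊆ G.DSet ν

/-- Extension by zero of a function on `∂Λ^{≥n}` to `∂Λ`. -/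
noncomputable def extFun {n : Fin k → ℕ} (f : G.geSet n → ℂ) :
    BPath G → ℂ :=
  fun x => if h : x ∈ G.geSet n then f ⟨x, h⟩ else 0

/-- The `C₀(∂Λ)`-valued inner product `⟨f,g⟩_n(x) = Σ_{σ_n(y)=x} conj(f y) g y`. -/
noncomputable def innerP (n : Fin k → ℕ) (f g : BPath G → ℂ) :
    BPath G → ℂ :=
  fun x => ∑' y : {y : BPath G // G.ShiftEq n y x}, conj (f y) * g y

/-- Characteristic function `χ_{D_λ \ D_{λF}}`. -/
noncomputable def chiD (lam : G.P) (F : Set G.P) : BPath G → ℂ :=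
  fun x => if x ∈ G.DSet lam \ G.DFSet lam F then 1 else 0

end KGraph

namespace KGraph

variable {k : ℕ} (G : KGraph k)

/-- `F(λ,μ) := Ext(λ;{μ})`. -/
def Fpair (lam mu : G.P) : Set G.P := G.Ext lam {mu}

/-- The set `F_α` appearing in Lemma 3.4 of the paper. -/
def Falpha (lam mu : G.P) (F Gs : Set G.P) (α : G.P) : Set G.P :=
  (⋃ ν ∈ F, G.Fpair (G.comp lam α) (G.comp lam ν)) ∪
    (⋃ ξ ∈ Gs, G.Fpair (G.comp lam α) (G.comp mu ξ))

end KGraph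

namespace KGraph

variable {k : ℕ} {G : KGraph k}

lemma factor_unique {a b a' b' : G.P} (hab : G.s a = G.r b) (hab' : G.s a' = G.r b')
    (hd : G.d a = G.d a') (h : G.comp a b = G.comp a' b') : a = a' ∧ b = b' := by
  have h1 := G.d_comp a b hab
  have h2 := G.d_comp a' b' hab'
  rw [h, h2, ← hd] at h1
  have hdb : G.d b = G.d b' := add_left_cancel h1.symm
  obtain ⟨mn, -, huniq⟩ := G.factor (G.comp a b) (G.d a) (G.d b) (G.d_comp a b hab)
  have e1 : (a, b) = mn := huniq (a, b) ⟨hab, rfl, rfl, rfl⟩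
  have e2 : (a', b') = mn := huniq (a', b') ⟨hab', hd.symm, hdb.symm, h⟩
  have e := e1.trans e2.symm
  exact ⟨congrArg Prod.fst e, congrArg Prod.snd e⟩

lemma mem_DSet_left {a b : G.P} (hab : G.s a = G.r b) {x : BPath G}
    (hx : x ∈ G.DSet (G.comp a b)) : x ∈ G.DSet a := by
  obtain ⟨hdeg, hseg⟩ := hx
  have hdc : G.d (G.comp a b) = G.d a + G.d b := G.d_comp a b hab
  have hle : G.d a ≤ G.d (G.comp a b) := by rw [hdc]; exact le_self_add
  have hdeg' : ∀ i, (G.d a i : ℕ∞) ≤ x.1.deg i := fun i =>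
    le_trans (Nat.cast_le.mpr (hle i)) (hdeg i)
  have h0a : (0 : Fin k → ℕ) ≤ G.d a := fun i => Nat.zero_le _
  have hcomp := x.1.comp_seg 0 (G.d a) (G.d (G.comp a b)) h0a hle hdeg
  have hs := x.1.s_seg 0 (G.d a) (G.d (G.comp a b)) h0a hle hdeg
  have hda : G.d (x.1.seg 0 (G.d a)) = G.d a := by
    have := x.1.d_seg 0 (G.d a) h0a hdeg'
    simpa using this
  have hfu := factor_unique (a := x.1.seg 0 (G.d a))
    (b := x.1.seg (G.d a) (G.d (G.comp a b))) (a' := a) (b' := b)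
    hs hab hda (by rw [← hcomp, hseg])
  exact ⟨hdeg', hfu.1⟩

lemma exists_min_ext {a b : G.P} {x : BPath G} (hxa : x ∈ G.DSet a)
    (hxb : x ∈ G.DSet b) : ∃ p ∈ G.Lmin a b, x ∈ G.DSet (G.comp a p.1) := by
  set N : Fin k → ℕ := G.d a ⊔ G.d b with hNdef
  have hNdeg : ∀ i, (N i : ℕ∞) ≤ x.1.deg i := by
    intro i
    rcases le_total (G.d a i) (G.d b i) with h | h
    · have hh : N i = G.d b i := sup_eq_right.mpr h
      rw [hh]; exact hxb.1 i
    · have hh : N i = G.d a i := sup_eq_left.mpr h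
      rw [hh]; exact hxa.1 i
  have haN : G.d a ≤ N := le_sup_left
  have hbN : G.d b ≤ N := le_sup_right
  have h0a : (0 : Fin k → ℕ) ≤ G.d a := fun i => Nat.zero_le _
  have h0b : (0 : Fin k → ℕ) ≤ G.d b := fun i => Nat.zero_le _
  set τ := x.1.seg (G.d a) N with hτdef
  set σ := x.1.seg (G.d b) N with hσdef
  have hca : x.1.seg 0 N = G.comp a τ := by
    rw [x.1.comp_seg 0 (G.d a) N h0a haN hNdeg, hxa.2]
  have hcb : x.1.seg 0 N = G.comp b σ := by
    rw [x.1.comp_seg 0 (G.d b) N h0b hbN hNdeg, hxb.2]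
  have hsa : G.s a = G.r τ := by
    have := x.1.s_seg 0 (G.d a) N h0a haN hNdeg
    rwa [hxa.2] at this
  have hsb : G.s b = G.r σ := by
    have := x.1.s_seg 0 (G.d b) N h0b hbN hNdeg
    rwa [hxb.2] at this
  have hdτ : G.d τ = N - G.d a := x.1.d_seg (G.d a) N haN hNdeg
  have hdsum : G.d a + G.d τ = G.d a ⊔ G.d b := by
    rw [hdτ]; funext i
    exact Nat.add_sub_cancel' (haN i)
  have hdaτ : G.d (G.comp a τ) = N := by rw [G.d_comp a τ hsa, hdsum]
  refine ⟨(τ, σ), ⟨hsa, hsb, ?_, hdsum⟩, ?_, ?_⟩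
  · rw [← hca, ← hcb]
  · intro i; rw [hdaτ]; exact hNdeg i
  · rw [hdaτ, hca]

lemma mem_Lmin_unique {a b : G.P} {p p' : G.P × G.P} (hp : p ∈ G.Lmin a b)
    (hp' : p' ∈ G.Lmin a b) {x : BPath G}
    (hx : x ∈ G.DSet (G.comp a p.1)) (hx' : x ∈ G.DSet (G.comp a p'.1)) :
    p = p' := by
  obtain ⟨hs1, hs2, hc, hd⟩ := hp
  obtain ⟨hs1', hs2', hc', hd'⟩ := hp'
  have hdeq : G.d (G.comp a p.1) = G.d (G.comp a p'.1) := by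
    rw [G.d_comp a p.1 hs1, G.d_comp a p'.1 hs1', hd, hd']
  have hcc : G.comp a p.1 = G.comp a p'.1 := by
    have h1 := hx.2
    have h2 := hx'.2
    rw [← hdeq] at h2
    rw [← h1, ← h2]
  have h1 := factor_unique hs1 hs1' rfl hcc
  have h2 := factor_unique hs2 hs2' rfl (by rw [← hc, ← hc', hcc])
  exact Prod.ext h1.2 h2.2

end KGraph

/-- `(D_λ \ D_{λF}) ∩ (D_μ \ D_{μG})` is the disjoint union over
`(α,β) ∈ Λ^min(λ,μ)` of the sets `D_{λα} \ D_{λα F_α}`. -/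
theorem stmt1 {k : ℕ} (G : KGraph k) (hFA : G.FinitelyAligned)
    (lam mu : G.P) (F Gs : Set G.P) (hFfin : F.Finite) (hGfin : Gs.Finite)
    (hFsub : ∀ ν ∈ F, G.r ν = G.s lam) (hGsub : ∀ ξ ∈ Gs, G.r ξ = G.s mu) :
    ((G.DSet lam \ G.DFSet lam F) ∩ (G.DSet mu \ G.DFSet mu Gs) =
      ⋃ p ∈ G.Lmin lam mu,
        G.DSet (G.comp lam p.1) \
          G.DFSet (G.comp lam p.1) (G.Falpha lam mu F Gs p.1)) ∧
    (G.Lmin lam mu).Pairwise (fun p p' =>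
      Disjoint
        (G.DSet (G.comp lam p.1) \
          G.DFSet (G.comp lam p.1) (G.Falpha lam mu F Gs p.1))
        (G.DSet (G.comp lam p'.1) \
          G.DFSet (G.comp lam p'.1) (G.Falpha lam mu F Gs p'.1))) := by
  constructor
  · ext x
    simp only [Set.mem_inter_iff, Set.mem_diff, Set.mem_iUnion, exists_prop]
    constructor
    · rintro ⟨⟨hxl, hxlF⟩, hxm, hxmG⟩
      obtain ⟨p, hp, hxp⟩ := KGraph.exists_min_ext hxl hxm
      refine ⟨p, hp, hxp, ?_⟩
      intro hmem
      obtain ⟨τ, hτ, hxτ⟩ := Set.mem_iUnion₂.mp hmem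
      rcases hτ with hτ | hτ
      · obtain ⟨ν, hνF, hτν⟩ := Set.mem_iUnion₂.mp hτ
        obtain ⟨ν', hν', b, hb⟩ := hτν
        rw [Set.mem_singleton_iff] at hν'
        subst hν'
        obtain ⟨hbs1, hbs2, hbc, -⟩ := hb
        rw [hbc] at hxτ
        exact hxlF (Set.mem_biUnion hνF (KGraph.mem_DSet_left hbs2 hxτ))
      · obtain ⟨ξ, hξG, hτξ⟩ := Set.mem_iUnion₂.mp hτ
        obtain ⟨ξ', hξ', b, hb⟩ := hτξ
        rw [Set.mem_singleton_iff] at hξ'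
        subst hξ'
        obtain ⟨hbs1, hbs2, hbc, -⟩ := hb
        rw [hbc] at hxτ
        exact hxmG (Set.mem_biUnion hξG (KGraph.mem_DSet_left hbs2 hxτ))
    · rintro ⟨p, hp, hxp, hxpF⟩
      obtain ⟨hs1, hs2, hc, hd⟩ := hp
      have hxl : x ∈ G.DSet lam := KGraph.mem_DSet_left hs1 hxp
      have hxm : x ∈ G.DSet mu := KGraph.mem_DSet_left hs2 (hc ▸ hxp)
      refine ⟨⟨hxl, ?_⟩, hxm, ?_⟩
      · intro hmem
        obtain ⟨ν, hνF, hxν⟩ := Set.mem_iUnion₂.mp hmem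
        obtain ⟨q, hq, hxq⟩ := KGraph.exists_min_ext hxp hxν
        refine hxpF (Set.mem_biUnion ?_ hxq)
        exact Or.inl (Set.mem_biUnion hνF ⟨G.comp lam ν, rfl, q.2, hq⟩)
      · intro hmem
        obtain ⟨ξ, hξG, hxξ⟩ := Set.mem_iUnion₂.mp hmem
        obtain ⟨q, hq, hxq⟩ := KGraph.exists_min_ext hxp hxξ
        refine hxpF (Set.mem_biUnion ?_ hxq)
        exact Or.inr (Set.mem_biUnion hξG ⟨G.comp mu ξ, rfl, q.2, hq⟩)
  · intro p hp p' hp' hne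
    rw [Set.disjoint_left]
    intro x hx hx'
    exact hne (KGraph.mem_Lmin_unique hp hp' hx.1 hx'.1)
end

section
/- Let Λ be a finitely-aligned k-graph, n ∈ ℕ^k, and (λ,F) a pair with F ⊆ s(λ)Λ finite such that D_λ \ D_{λF} ⊆ ∂Λ^{≥n} := {x ∈ ∂Λ : d(x) ≥ n}. Then D_λ \ D_{λF} is the disjoint union over μ ∈ s(λ)Λ^{d(λ)∨n − d(λ)} of the sets D_{λμ} \ D_{λμ Ext(μ;F)}, and each pair (λμ, Ext(μ;F)) consists of a path of degree ≥ n together with a finite subset of s(λμ)Λ. -/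
open scoped ENNReal ComplexConjugate ZeroAtInfty
open Classical

namespace KGraph

variable {k : ℕ}

/-- Unique factorisation applied to initial segments of a graph morphism. -/
lemma seg_factor (G : KGraph k) (x : GM G) (a b : G.P) (hab : G.s a = G.r b)
    (hb : ∀ i, (((G.d a + G.d b) i : ℕ) : ℕ∞) ≤ x.deg i)
    (h : x.seg 0 (G.d a + G.d b) = G.comp a b) :
    x.seg 0 (G.d a) = a ∧ x.seg (G.d a) (G.d a + G.d b) = b := by
  have hd : G.d (x.seg 0 (G.d a + G.d b)) = G.d a + G.d b := by
    simpa using x.d_seg 0 _ (fun i => Nat.zero_le _) hb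
  obtain ⟨mn, -, huniq⟩ := G.factor (x.seg 0 (G.d a + G.d b)) (G.d a) (G.d b) hd
  have h1 : ((a, b) : G.P × G.P) = mn := huniq (a, b) ⟨hab, rfl, rfl, h⟩
  have hle1 : (0 : Fin k → ℕ) ≤ G.d a := fun i => Nat.zero_le _
  have hle2 : G.d a ≤ G.d a + G.d b := fun i => Nat.le_add_right _ _
  have hba : ∀ i, ((G.d a i : ℕ) : ℕ∞) ≤ x.deg i := by
    intro i
    refine le_trans ?_ (hb i)
    simp only [Pi.add_apply, Nat.cast_add]
    exact self_le_add_right _ _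
  have h2 : ((x.seg 0 (G.d a), x.seg (G.d a) (G.d a + G.d b)) : G.P × G.P) = mn := by
    refine huniq _ ⟨x.s_seg 0 _ _ hle1 hle2 hb, ?_, ?_, x.comp_seg 0 _ _ hle1 hle2 hb⟩
    · simpa using x.d_seg 0 (G.d a) hle1 hba
    · have := x.d_seg (G.d a) _ hle2 hb
      rwa [add_tsub_cancel_left] at this
  have h3 := h2.trans h1.symm
  exact ⟨congrArg Prod.fst h3, congrArg Prod.snd h3⟩

lemma DSet_comp_subset (G : KGraph k) (a b : G.P) (hab : G.s a = G.r b) :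
    G.DSet (G.comp a b) ⊆ G.DSet a := by
  rintro x ⟨hd, hs⟩
  rw [G.d_comp a b hab] at hd hs
  obtain ⟨h1, -⟩ := G.seg_factor x.1 a b hab hd hs
  refine ⟨fun i => le_trans ?_ (hd i), h1⟩
  simp only [Pi.add_apply, Nat.cast_add]
  exact self_le_add_right _ _

end KGraph

/-- If `D_λ \ D_{λF} ⊆ ∂Λ^{≥n}` then `D_λ \ D_{λF}` is the disjoint union over
`μ ∈ s(λ)Λ^{d(λ)∨n − d(λ)}` of the sets `D_{λμ} \ D_{λμ Ext(μ;F)}`, and each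
pair `(λμ, Ext(μ;F))` consists of a path of degree `≥ n` together with a
finite subset of `s(λμ)Λ`. -/
theorem stmt2 {k : ℕ} (G : KGraph k) (hFA : G.FinitelyAligned)
    (n : Fin k → ℕ) (lam : G.P) (F : Set G.P) (hFfin : F.Finite)
    (hFsub : ∀ ν ∈ F, G.r ν = G.s lam)
    (hsub : G.DSet lam \ G.DFSet lam F ⊆ G.geSet n) :
    (G.DSet lam \ G.DFSet lam F =
      ⋃ mu ∈ {mu : G.P | G.r mu = G.s lam ∧
          G.d mu = (G.d lam ⊔ n) - G.d lam},
        G.DSet (G.comp lam mu) \ G.DFSet (G.comp lam mu) (G.Ext mu F)) ∧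
    ({mu : G.P | G.r mu = G.s lam ∧
        G.d mu = (G.d lam ⊔ n) - G.d lam}.Pairwise (fun mu mu' =>
      Disjoint
        (G.DSet (G.comp lam mu) \ G.DFSet (G.comp lam mu) (G.Ext mu F))
        (G.DSet (G.comp lam mu') \ G.DFSet (G.comp lam mu') (G.Ext mu' F)))) ∧
    (∀ mu : G.P, G.r mu = G.s lam → G.d mu = (G.d lam ⊔ n) - G.d lam →
      n ≤ G.d (G.comp lam mu) ∧ (G.Ext mu F).Finite ∧
        ∀ a ∈ G.Ext mu F, G.r a = G.s (G.comp lam mu)) := by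
  set m := G.d lam with hm
  set e := (m ⊔ n) - m with he
  have hme : m + e = m ⊔ n := by
    funext i
    simp only [Pi.add_apply, Pi.sup_apply, he, Pi.sub_apply]
    have := le_max_left (m i) (n i)
    omega
  have h0m : (0 : Fin k → ℕ) ≤ m := fun i => Nat.zero_le _
  have hlem : m ≤ m + e := fun i => Nat.le_add_right _ _
  refine ⟨?_, ?_, ?_⟩
  · -- the union decomposition
    ext x
    simp only [Set.mem_iUnion, Set.mem_setOf_eq, exists_prop]
    constructor
    · rintro ⟨hxD, hxF⟩
      have hge : ∀ i, ((n i : ℕ) : ℕ∞) ≤ x.1.deg i := hsub ⟨hxD, hxF⟩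
      obtain ⟨hdeg, hseg⟩ := hxD
      have hbt : ∀ i, (((m + e) i : ℕ) : ℕ∞) ≤ x.1.deg i := by
        intro i
        rw [hme]
        simp only [Pi.sup_apply]
        rcases le_total (m i) (n i) with h | h
        · rw [max_eq_right h]; exact hge i
        · rw [max_eq_left h]; exact hdeg i
      set μ := x.1.seg m (m + e) with hμ
      have hsμ : G.s lam = G.r μ := by
        have := x.1.s_seg 0 m (m + e) h0m hlem hbt
        rwa [hseg] at this
      have hdμ : G.d μ = e := by
        have := x.1.d_seg m (m + e) hlem hbt
        rwa [add_tsub_cancel_left] at this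
      have hcomp : x.1.seg 0 (m + e) = G.comp lam μ := by
        have := x.1.comp_seg 0 m (m + e) h0m hlem hbt
        rwa [hseg] at this
      refine ⟨μ, ⟨hsμ.symm, hdμ⟩, ⟨?_, ?_⟩, ?_⟩
      · rw [G.d_comp lam μ hsμ, hdμ]; exact hbt
      · rw [G.d_comp lam μ hsμ, hdμ]; exact hcomp
      · intro hmem
        obtain ⟨α, hα, hxα⟩ := Set.mem_iUnion₂.mp hmem
        obtain ⟨ν, hν, β, hsα, hsβ, hcc, -⟩ := hα
        have hsν : G.s lam = G.r ν := (hFsub ν hν).symm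
        have e1 : G.comp (G.comp lam μ) α = G.comp (G.comp lam ν) β := by
          rw [G.comp_assoc lam μ α hsμ hsα, hcc, ← G.comp_assoc lam ν β hsν hsβ]
        have hsβ' : G.s (G.comp lam ν) = G.r β := by
          rw [G.s_comp lam ν hsν]; exact hsβ
        apply hxF
        exact Set.mem_biUnion hν (G.DSet_comp_subset (G.comp lam ν) β hsβ'
          (by rwa [e1] at hxα))
    · rintro ⟨μ, ⟨hrμ, hdμ⟩, ⟨hdeg, hseg⟩, hxμF⟩
      have hsμ : G.s lam = G.r μ := hrμ.symm
      rw [G.d_comp lam μ hsμ] at hdeg hseg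
      obtain ⟨hseglam, hsegμ⟩ := G.seg_factor x.1 lam μ hsμ hdeg hseg
      have hbm : ∀ i, ((m i : ℕ) : ℕ∞) ≤ x.1.deg i := by
        intro i
        refine le_trans ?_ (hdeg i)
        simp only [Pi.add_apply, Nat.cast_add]
        exact self_le_add_right _ _
      refine ⟨⟨hbm, hseglam⟩, ?_⟩
      intro hmem
      obtain ⟨ν, hν, hxν⟩ := Set.mem_iUnion₂.mp hmem
      have hsν : G.s lam = G.r ν := (hFsub ν hν).symm
      obtain ⟨hdegν, hsegν⟩ := hxν
      rw [G.d_comp lam ν hsν] at hdegν hsegν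
      obtain ⟨-, hsegν'⟩ := G.seg_factor x.1 lam ν hsν hdegν hsegν
      -- the common extension
      set T := m + (G.d μ ⊔ G.d ν) with hT
      have hbT : ∀ i, ((T i : ℕ) : ℕ∞) ≤ x.1.deg i := by
        intro i
        rcases le_total (G.d μ i) (G.d ν i) with h | h
        · have hTi : T i = (m + G.d ν) i := by
            simp only [hT, Pi.add_apply, Pi.sup_apply, max_eq_right h]
          rw [hTi]; exact hdegν i
        · have hTi : T i = (m + G.d μ) i := by
            simp only [hT, Pi.add_apply, Pi.sup_apply, max_eq_left h]
          rw [hTi]; exact hdeg i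
      have hle1 : m + G.d μ ≤ T := fun i => by
        simp only [hT, Pi.add_apply, Pi.sup_apply]
        exact Nat.add_le_add_left (le_max_left _ _) _
      have hle2 : m + G.d ν ≤ T := fun i => by
        simp only [hT, Pi.add_apply, Pi.sup_apply]
        exact Nat.add_le_add_left (le_max_right _ _) _
      have hlem1 : m ≤ m + G.d μ := fun i => Nat.le_add_right _ _
      have hlem2 : m ≤ m + G.d ν := fun i => Nat.le_add_right _ _
      set α := x.1.seg (m + G.d μ) T with hα
      set β := x.1.seg (m + G.d ν) T with hβ
      have hsα : G.s μ = G.r α := by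
        have := x.1.s_seg m (m + G.d μ) T hlem1 hle1 hbT
        rwa [hsegμ] at this
      have hsβ : G.s ν = G.r β := by
        have := x.1.s_seg m (m + G.d ν) T hlem2 hle2 hbT
        rwa [hsegν'] at this
      have hdα : G.d α = T - (m + G.d μ) := x.1.d_seg _ _ hle1 hbT
      have key : G.d μ + G.d α = G.d μ ⊔ G.d ν := by
        funext i
        simp only [Pi.add_apply, Pi.sup_apply, hdα, Pi.sub_apply, hT]
        have h1 := le_max_left (G.d μ i) (G.d ν i)
        omega
      have hμα : G.comp μ α = x.1.seg m T := by
        have := x.1.comp_seg m (m + G.d μ) T hlem1 hle1 hbT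
        rw [hsegμ] at this
        exact this.symm
      have hνβ : G.comp ν β = x.1.seg m T := by
        have := x.1.comp_seg m (m + G.d ν) T hlem2 hle2 hbT
        rw [hsegν'] at this
        exact this.symm
      have hmin : (α, β) ∈ G.Lmin μ ν := ⟨hsα, hsβ, hμα.trans hνβ.symm, key⟩
      apply hxμF
      refine Set.mem_biUnion ⟨ν, hν, β, hmin⟩ (?_ : x ∈ G.DSet (G.comp (G.comp lam μ) α))
      have hsμα : G.s (G.comp lam μ) = G.r α := by
        rw [G.s_comp lam μ hsμ]; exact hsα
      have hdT : G.d (G.comp (G.comp lam μ) α) = T := by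
        rw [G.d_comp _ _ hsμα, G.d_comp lam μ hsμ, add_assoc, key]
      have hsegT : x.1.seg 0 T = G.comp (G.comp lam μ) α := by
        have := x.1.comp_seg 0 (m + G.d μ) T (fun i => Nat.zero_le _) hle1 hbT
        rwa [hseg] at this
      exact ⟨by rw [hdT]; exact hbT, by rw [hdT]; exact hsegT⟩
  · -- pairwise disjointness
    intro μ hμ μ' hμ' hne
    rw [Set.disjoint_left]
    rintro x ⟨⟨hd1, hs1⟩, -⟩ ⟨⟨hd2, hs2⟩, -⟩
    apply hne
    rw [G.d_comp lam μ hμ.1.symm, hμ.2] at hd1 hs1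
    rw [G.d_comp lam μ' hμ'.1.symm, hμ'.2] at hd2 hs2
    have h1 := (G.seg_factor x.1 lam μ hμ.1.symm (by rw [hμ.2]; exact hd1)
      (by rw [hμ.2]; exact hs1)).2
    have h2 := (G.seg_factor x.1 lam μ' hμ'.1.symm (by rw [hμ'.2]; exact hd2)
      (by rw [hμ'.2]; exact hs2)).2
    rw [hμ.2] at h1
    rw [hμ'.2] at h2
    exact h1.symm.trans h2
  · -- properties of each pair
    intro μ hr hd
    refine ⟨?_, ?_, ?_⟩
    · rw [G.d_comp lam μ hr.symm, hd, hme]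
      exact le_sup_right
    · have hss : G.Ext μ F ⊆ ⋃ ν ∈ F, Prod.fst '' (G.Lmin μ ν) := by
        rintro a ⟨ν, hν, b, hb⟩
        exact Set.mem_biUnion hν ⟨(a, b), hb, rfl⟩
      exact Set.Finite.subset (hFfin.biUnion fun ν _ => (hFA μ ν).image _) hss
    · rintro a ⟨ν, hν, b, hb⟩
      rw [G.s_comp lam μ hr.symm]
      exact hb.1.symm
end

section
/- Let Λ be a finitely-aligned k-graph and n ∈ ℕ^k with ∂Λ^{≥n} nonempty. Then the complement ∂Λ^{\not≥ n} = {x ∈ ∂Λ : d(x) ≱ n} is closed in ∂Λ, hence ∂Λ^{≥n} is an open, locally compact subspace of ∂Λ. -/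
open scoped ENNReal ComplexConjugate ZeroAtInfty
open Classical

open Filter Topology

namespace KGraph

variable {k : ℕ} {G : KGraph k}

lemma pi_zero_le (p : Fin k → ℕ) : (0 : Fin k → ℕ) ≤ p := fun _ => Nat.zero_le _

lemma pi_add_sub {p q : Fin k → ℕ} (h : p ≤ q) : p + (q - p) = q :=
  funext fun i => Nat.add_sub_cancel' (h i)

lemma pi_sub_zero (q : Fin k → ℕ) : q - 0 = q := funext fun _ => Nat.sub_zero _

lemma cast_le_trans {q p : Fin k → ℕ} {D : Fin k → ℕ∞} (h : q ≤ p)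
    (hp : ∀ i, (p i : ℕ∞) ≤ D i) : ∀ i, (q i : ℕ∞) ≤ D i :=
  fun i => le_trans (by exact_mod_cast h i) (hp i)

lemma sup_cast_le {a b : Fin k → ℕ} {D : Fin k → ℕ∞} (ha : ∀ i, (a i : ℕ∞) ≤ D i)
    (hb : ∀ i, (b i : ℕ∞) ≤ D i) : ∀ i, ((a ⊔ b) i : ℕ∞) ≤ D i := by
  intro i
  have h : (a ⊔ b) i = max (a i) (b i) := rfl
  rw [h]
  rcases max_cases (a i) (b i) with ⟨he, -⟩ | ⟨he, -⟩ <;> rw [he]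
  exacts [ha i, hb i]

lemma factor_eq {lam a b a' b' : G.P} (hab : G.s a = G.r b) (hab' : G.s a' = G.r b')
    (hda : G.d a = G.d a') (hdb : G.d b = G.d b')
    (h1 : lam = G.comp a b) (h2 : lam = G.comp a' b') : a = a' ∧ b = b' := by
  obtain ⟨mn, -, huniq⟩ := G.factor lam (G.d a) (G.d b) (by rw [h1, G.d_comp a b hab])
  have e1 : (a, b) = mn := huniq (a, b) ⟨hab, rfl, rfl, h1⟩
  have e2 : (a', b') = mn := huniq (a', b') ⟨hab', hda.symm, hdb.symm, h2⟩
  have e := e1.trans e2.symm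
  exact ⟨congrArg Prod.fst e, congrArg Prod.snd e⟩

lemma seg_congr {x y : GM G} {q0 : Fin k → ℕ}
    (hx : ∀ i, (q0 i : ℕ∞) ≤ x.deg i) (hy : ∀ i, (q0 i : ℕ∞) ≤ y.deg i)
    (h : x.seg 0 q0 = y.seg 0 q0) {p q : Fin k → ℕ} (hpq : p ≤ q) (hq : q ≤ q0) :
    x.seg p q = y.seg p q := by
  have h0p : (0 : Fin k → ℕ) ≤ p := pi_zero_le p
  have hpq0 : p ≤ q0 := le_trans hpq hq
  have hxp := cast_le_trans hpq0 hx
  have hyp := cast_le_trans hpq0 hy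
  have hxq := cast_le_trans hq hx
  have hyq := cast_le_trans hq hy
  have step1 : x.seg 0 p = y.seg 0 p ∧ x.seg p q0 = y.seg p q0 := by
    refine factor_eq (x.s_seg 0 p q0 h0p hpq0 hx) (y.s_seg 0 p q0 h0p hpq0 hy) ?_ ?_
      (x.comp_seg 0 p q0 h0p hpq0 hx) (by rw [h]; exact y.comp_seg 0 p q0 h0p hpq0 hy)
    · rw [x.d_seg 0 p h0p hxp, y.d_seg 0 p h0p hyp]
    · rw [x.d_seg p q0 hpq0 hx, y.d_seg p q0 hpq0 hy]
  refine (factor_eq (x.s_seg p q q0 hpq hq hx) (y.s_seg p q q0 hpq hq hy) ?_ ?_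
    (x.comp_seg p q q0 hpq hq hx) (by rw [step1.2]; exact y.comp_seg p q q0 hpq hq hy)).1
  · rw [x.d_seg p q hpq hxq, y.d_seg p q hpq hyq]
  · rw [x.d_seg q q0 hq hx, y.d_seg q q0 hq hy]

lemma DSet_seg_congr {μ : G.P} {z w : BPath G} (hz : z ∈ G.DSet μ) (hw : w ∈ G.DSet μ)
    {p q : Fin k → ℕ} (hpq : p ≤ q) (hq : q ≤ G.d μ) : z.1.seg p q = w.1.seg p q :=
  seg_congr hz.1 hw.1 (hz.2.trans hw.2.symm) hpq hq

lemma mem_DSet_initial {z : BPath G} {p : Fin k → ℕ} (hp : ∀ i, (p i : ℕ∞) ≤ z.1.deg i) :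
    z ∈ G.DSet (z.1.seg 0 p) ∧ G.d (z.1.seg 0 p) = p := by
  have hd : G.d (z.1.seg 0 p) = p := by
    rw [z.1.d_seg 0 p (pi_zero_le p) hp, pi_sub_zero]
  exact ⟨⟨by rw [hd]; exact hp, by rw [hd]⟩, hd⟩

lemma DSet_comp_subset_s3 {μ α : G.P} (hs : G.s μ = G.r α) :
    G.DSet (G.comp μ α) ⊆ G.DSet μ := by
  intro z hz
  have hd : G.d (G.comp μ α) = G.d μ + G.d α := G.d_comp μ α hs
  have hle : G.d μ ≤ G.d (G.comp μ α) := by rw [hd]; exact fun i => Nat.le_add_right _ _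
  have hdeg : ∀ i, (G.d μ i : ℕ∞) ≤ z.1.deg i := cast_le_trans hle hz.1
  refine ⟨hdeg, ?_⟩
  have hcs := z.1.comp_seg 0 (G.d μ) (G.d (G.comp μ α)) (pi_zero_le _) hle hz.1
  rw [hz.2] at hcs
  refine (factor_eq (lam := G.comp μ α)
    (z.1.s_seg 0 (G.d μ) _ (pi_zero_le _) hle hz.1) hs ?_ ?_ hcs rfl).1
  · rw [z.1.d_seg 0 (G.d μ) (pi_zero_le _) hdeg, pi_sub_zero]
  · rw [z.1.d_seg (G.d μ) _ hle hz.1, hd]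
    funext i
    simp

lemma exists_Lmin_of_mem_inter {μ ν : G.P} {z : BPath G}
    (hzμ : z ∈ G.DSet μ) (hzν : z ∈ G.DSet ν) :
    ∃ ab ∈ G.Lmin μ ν, z ∈ G.DSet (G.comp μ ab.1) := by
  set p := G.d μ ⊔ G.d ν with hpdef
  have hμp : G.d μ ≤ p := le_sup_left
  have hνp : G.d ν ≤ p := le_sup_right
  have hp : ∀ i, (p i : ℕ∞) ≤ z.1.deg i := sup_cast_le hzμ.1 hzν.1
  have hsμ : G.s μ = G.r (z.1.seg (G.d μ) p) := by
    have h := z.1.s_seg 0 (G.d μ) p (pi_zero_le _) hμp hp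
    rwa [hzμ.2] at h
  have hsν : G.s ν = G.r (z.1.seg (G.d ν) p) := by
    have h := z.1.s_seg 0 (G.d ν) p (pi_zero_le _) hνp hp
    rwa [hzν.2] at h
  have hcμ : z.1.seg 0 p = G.comp μ (z.1.seg (G.d μ) p) := by
    have h := z.1.comp_seg 0 (G.d μ) p (pi_zero_le _) hμp hp
    rwa [hzμ.2] at h
  have hcν : z.1.seg 0 p = G.comp ν (z.1.seg (G.d ν) p) := by
    have h := z.1.comp_seg 0 (G.d ν) p (pi_zero_le _) hνp hp
    rwa [hzν.2] at h
  have hsum : G.d μ + G.d (z.1.seg (G.d μ) p) = p := by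
    rw [z.1.d_seg (G.d μ) p hμp hp]; exact pi_add_sub hμp
  have hdc : G.d (G.comp μ (z.1.seg (G.d μ) p)) = p := by
    rw [G.d_comp _ _ hsμ, hsum]
  exact ⟨(z.1.seg (G.d μ) p, z.1.seg (G.d ν) p),
    ⟨hsμ, hsν, hcμ.symm.trans hcν, hsum⟩,
    ⟨by rw [hdc]; exact hp, by rw [hdc]; exact hcμ⟩⟩

lemma mem_DFSet {lam : G.P} {F : Set G.P} {x : BPath G} :
    x ∈ G.DFSet lam F ↔ ∃ c ∈ F, x ∈ G.DSet (G.comp lam c) := by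
  simp [DFSet]

lemma isOpen_basic {U : Set (BPath G)} (h : U ∈ G.basicSets) : IsOpen U :=
  TopologicalSpace.isOpen_generateFrom_of_mem h

lemma DSet_mem_basicSets (μ : G.P) : G.DSet μ ∈ G.basicSets := by
  refine ⟨μ, ∅, Set.finite_empty, by simp, ?_⟩
  simp [DFSet]

lemma isOpen_DSet (μ : G.P) : IsOpen (G.DSet μ) := isOpen_basic (DSet_mem_basicSets μ)

lemma isOpen_DFSet (lam : G.P) (F : Set G.P) : IsOpen (G.DFSet lam F) :=
  isOpen_biUnion fun c _ => isOpen_DSet _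

lemma isClosed_DSet (hFA : G.FinitelyAligned) (μ : G.P) : IsClosed (G.DSet μ) := by
  rw [← isOpen_compl_iff, isOpen_iff_forall_mem_open]
  intro x hx
  by_cases hdeg : ∀ i, (G.d μ i : ℕ∞) ≤ x.1.deg i
  · -- degree fits but the segment differs
    have hne : x.1.seg 0 (G.d μ) ≠ μ := fun h => hx ⟨hdeg, h⟩
    obtain ⟨hxl, hdl⟩ := mem_DSet_initial (z := x) hdeg
    refine ⟨G.DSet (x.1.seg 0 (G.d μ)), ?_, isOpen_DSet _, hxl⟩
    intro y hy hy'
    apply hne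
    have h1 : y.1.seg 0 (G.d μ) = x.1.seg 0 (G.d μ) := by
      have := hy.2
      rwa [hdl] at this
    exact h1.symm.trans hy'.2
  · push_neg at hdeg
    obtain ⟨i, hi⟩ := hdeg
    classical
    set m : Fin k → ℕ := fun j =>
      if (G.d μ j : ℕ∞) ≤ x.1.deg j then G.d μ j else (x.1.deg j).toNat with hm
    have hm_le_deg : ∀ j, (m j : ℕ∞) ≤ x.1.deg j := by
      intro j
      by_cases h : (G.d μ j : ℕ∞) ≤ x.1.deg j
      · simp only [hm, if_pos h]; exact h
      · have hne : x.1.deg j ≠ ⊤ := by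
          intro he
          exact h (he ▸ le_top)
        simp only [hm, if_neg h]
        rw [ENat.coe_toNat hne]
    have hm_le_dμ : m ≤ G.d μ := by
      intro j
      by_cases h : (G.d μ j : ℕ∞) ≤ x.1.deg j
      · simp only [hm, if_pos h]; exact le_rfl
      · simp only [hm, if_neg h]
        have hlt : x.1.deg j < (G.d μ j : ℕ∞) := not_le.mp h
        have hne : x.1.deg j ≠ ⊤ := hlt.ne_top
        have : ((x.1.deg j).toNat : ℕ∞) < (G.d μ j : ℕ∞) := by
          rwa [ENat.coe_toNat hne]
        exact_mod_cast this.le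
    have hmi : (m i : ℕ∞) ≤ x.1.deg i := hm_le_deg i
    obtain ⟨hxl, hdl⟩ := mem_DSet_initial (z := x) hm_le_deg
    set lam := x.1.seg 0 m with hlam
    set F : Set G.P := Prod.fst '' G.Lmin lam μ with hF
    have hFfin : F.Finite := (hFA lam μ).image _
    have hFr : ∀ ν ∈ F, G.r ν = G.s lam := by
      rintro ν ⟨ab, hab, rfl⟩
      exact hab.1.symm
    refine ⟨G.DSet lam \ G.DFSet lam F, ?_, isOpen_basic ⟨lam, F, hFfin, hFr, rfl⟩, ⟨hxl, ?_⟩⟩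
    · -- the basic set avoids DSet μ
      rintro y ⟨hyl, hyF⟩ hyμ
      obtain ⟨ab, hab, hyab⟩ := exists_Lmin_of_mem_inter hyl hyμ
      exact hyF (mem_DFSet.mpr ⟨ab.1, ⟨ab, hab, rfl⟩, hyab⟩)
    · -- x is not in D_{λF}
      intro hxF
      obtain ⟨ν, ⟨ab, hab, rfl⟩, hxν⟩ := mem_DFSet.mp hxF
      have hdc : G.d (G.comp lam ab.1) = G.d lam ⊔ G.d μ := by
        rw [G.d_comp _ _ hab.1]; exact hab.2.2.2
      have h1 := hxν.1 i
      rw [hdc] at h1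
      have h2 : (G.d μ i : ℕ∞) ≤ ((G.d lam ⊔ G.d μ) i : ℕ∞) := by
        have : G.d μ i ≤ (G.d lam ⊔ G.d μ) i := le_sup_right (a := G.d lam i)
        exact_mod_cast this
      exact absurd (le_trans h2 h1) (not_le.mpr hi)

lemma ultrafilter_le_nhds (hFA : G.FinitelyAligned) (U : Ultrafilter (BPath G)) {lam0 : G.P}
    (hlam0 : G.DSet lam0 ∈ U) : ∃ x ∈ G.DSet lam0, ↑U ≤ 𝓝 x := by
  classical
  set S : Set G.P := {μ | G.DSet μ ∈ U} with hSdef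
  have hlamS : lam0 ∈ S := hlam0
  have hNE : ∀ μ ∈ S, (G.DSet μ).Nonempty := fun μ hμ => Ultrafilter.nonempty_of_mem hμ
  have hBne : Nonempty (BPath G) := ⟨(hNE lam0 hlamS).choose⟩
  have hz : ∀ μ : G.P, ∃ z : BPath G, μ ∈ S → z ∈ G.DSet μ := by
    intro μ
    by_cases h : μ ∈ S
    · exact ⟨(hNE μ h).choose, fun _ => (hNE μ h).choose_spec⟩
    · exact ⟨Classical.arbitrary _, fun h' => absurd h' h⟩
  choose zf hzf using hz
  -- directedness of S
  have hdir : ∀ μ ∈ S, ∀ ν ∈ S, ∃ τ ∈ S, G.d μ ≤ G.d τ ∧ G.d ν ≤ G.d τ ∧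
      G.DSet τ ⊆ G.DSet μ ∩ G.DSet ν := by
    intro μ hμ ν hν
    have hcover : G.DSet μ ∩ G.DSet ν ⊆ ⋃ ab ∈ G.Lmin μ ν, G.DSet (G.comp μ ab.1) := by
      rintro z ⟨h1, h2⟩
      obtain ⟨ab, hab, hzab⟩ := exists_Lmin_of_mem_inter h1 h2
      exact Set.mem_biUnion hab hzab
    have hmem : (⋃ ab ∈ G.Lmin μ ν, G.DSet (G.comp μ ab.1)) ∈ U :=
      Filter.mem_of_superset (Filter.inter_mem hμ hν) hcover
    obtain ⟨ab, habmem, habU⟩ := (Ultrafilter.finite_biUnion_mem_iff (hFA μ ν)).mp hmem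
    obtain ⟨hsμ, hsν, hcc, hdd⟩ := habmem
    have hdc : G.d (G.comp μ ab.1) = G.d μ ⊔ G.d ν := by rw [G.d_comp _ _ hsμ]; exact hdd
    refine ⟨G.comp μ ab.1, habU, by rw [hdc]; exact le_sup_left,
      by rw [hdc]; exact le_sup_right, ?_⟩
    intro z hzc
    refine ⟨DSet_comp_subset_s3 hsμ hzc, ?_⟩
    rw [hcc] at hzc
    exact DSet_comp_subset_s3 hsν hzc
  -- consistency of segments
  have hcons : ∀ μ ∈ S, ∀ ν ∈ S, ∀ z ∈ G.DSet μ, ∀ w ∈ G.DSet ν,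
      ∀ p q : Fin k → ℕ, p ≤ q → q ≤ G.d μ → q ≤ G.d ν → z.1.seg p q = w.1.seg p q := by
    intro μ hμ ν hν z hzμ w hwν p q hpq hqμ hqν
    obtain ⟨τ, hτ, -, -, hsub⟩ := hdir μ hμ ν hν
    obtain ⟨huμ, huν⟩ := hsub (hzf τ hτ)
    calc z.1.seg p q = (zf τ).1.seg p q := DSet_seg_congr hzμ huμ hpq hqμ
      _ = w.1.seg p q := DSet_seg_congr huν hwν hpq hqν
  -- the degree of the limit
  set xdeg : Fin k → ℕ∞ := fun i => ⨆ μ : S, (G.d μ.1 i : ℕ∞) with hxdegdef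
  have hSne : Nonempty S := ⟨⟨lam0, hlamS⟩⟩
  have hdeg_le : ∀ μ ∈ S, ∀ i, (G.d μ i : ℕ∞) ≤ xdeg i := fun μ hμ i =>
    le_iSup (fun ν : S => (G.d ν.1 i : ℕ∞)) ⟨μ, hμ⟩
  have reach : ∀ q : Fin k → ℕ, (∀ i, (q i : ℕ∞) ≤ xdeg i) → ∃ μ ∈ S, q ≤ G.d μ := by
    intro q hq
    have hper : ∀ i, ∃ μ : S, q i ≤ G.d μ.1 i := by
      intro i
      by_contra hcon
      push_neg at hcon
      have hub : xdeg i ≤ ((q i - 1 : ℕ) : ℕ∞) := by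
        apply iSup_le
        intro μ
        exact_mod_cast Nat.le_sub_one_of_lt (hcon μ)
      have h1 : (q i : ℕ∞) ≤ ((q i - 1 : ℕ) : ℕ∞) := le_trans (hq i) hub
      have h2 : q i ≤ q i - 1 := by exact_mod_cast h1
      have h3 : 0 < q i := lt_of_le_of_lt (Nat.zero_le _) (hcon ⟨lam0, hlamS⟩)
      omega
    choose g hg using hper
    have hdirf : Directed (· ≤ ·) (fun μ : S => G.d μ.1) := by
      intro μ ν
      obtain ⟨τ, hτ, h1, h2, -⟩ := hdir μ.1 μ.2 ν.1 ν.2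
      exact ⟨⟨τ, hτ⟩, h1, h2⟩
    obtain ⟨μmax, hμmax⟩ := hdirf.finset_le (Finset.univ.image g)
    refine ⟨μmax.1, μmax.2, fun i => le_trans (hg i) ?_⟩
    exact hμmax (g i) (Finset.mem_image_of_mem g (Finset.mem_univ i)) i
  -- the segment function of the limit
  set xseg : (Fin k → ℕ) → (Fin k → ℕ) → G.P := fun p q =>
    if h : ∃ μ, μ ∈ S ∧ q ≤ G.d μ then (zf h.choose).1.seg p q else lam0 with hxsegdef
  have hseg_eval : ∀ (μ : G.P), μ ∈ S → ∀ z ∈ G.DSet μ, ∀ p q : Fin k → ℕ,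
      p ≤ q → q ≤ G.d μ → xseg p q = z.1.seg p q := by
    intro μ hμ z hzμ p q hpq hqμ
    have hex : ∃ ν, ν ∈ S ∧ q ≤ G.d ν := ⟨μ, hμ, hqμ⟩
    show (if h : ∃ ν, ν ∈ S ∧ q ≤ G.d ν then (zf h.choose).1.seg p q else lam0) = z.1.seg p q
    rw [dif_pos hex]
    obtain ⟨hνS, hqν⟩ := hex.choose_spec
    exact hcons _ hνS _ hμ _ (hzf _ hνS) _ hzμ p q hpq hqν hqμ
  -- GM axioms
  have hA : ∀ p q : Fin k → ℕ, p ≤ q → (∀ i, (q i : ℕ∞) ≤ xdeg i) →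
      G.d (xseg p q) = q - p := by
    intro p q hpq hq
    obtain ⟨μ, hμ, hqμ⟩ := reach q hq
    have hzμ := hzf μ hμ
    rw [hseg_eval μ hμ _ hzμ p q hpq hqμ]
    exact (zf μ).1.d_seg p q hpq (cast_le_trans hqμ hzμ.1)
  have hB : ∀ p q r : Fin k → ℕ, p ≤ q → q ≤ r → (∀ i, (r i : ℕ∞) ≤ xdeg i) →
      xseg p r = G.comp (xseg p q) (xseg q r) := by
    intro p q r hpq hqr hr
    obtain ⟨μ, hμ, hrμ⟩ := reach r hr
    have hzμ := hzf μ hμ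
    have hqμ : q ≤ G.d μ := le_trans hqr hrμ
    rw [hseg_eval μ hμ _ hzμ p r (le_trans hpq hqr) hrμ,
        hseg_eval μ hμ _ hzμ p q hpq hqμ,
        hseg_eval μ hμ _ hzμ q r hqr hrμ]
    exact (zf μ).1.comp_seg p q r hpq hqr (cast_le_trans hrμ hzμ.1)
  have hC : ∀ p q r : Fin k → ℕ, p ≤ q → q ≤ r → (∀ i, (r i : ℕ∞) ≤ xdeg i) →
      G.s (xseg p q) = G.r (xseg q r) := by
    intro p q r hpq hqr hr
    obtain ⟨μ, hμ, hrμ⟩ := reach r hr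
    have hzμ := hzf μ hμ
    have hqμ : q ≤ G.d μ := le_trans hqr hrμ
    rw [hseg_eval μ hμ _ hzμ p q hpq hqμ, hseg_eval μ hμ _ hzμ q r hqr hrμ]
    exact (zf μ).1.s_seg p q r hpq hqr (cast_le_trans hrμ hzμ.1)
  set x0 : GM G := ⟨xdeg, xseg, hA, hB, hC⟩ with hx0def
  -- membership of x0 in the cylinders indexed by S
  have hx0mem : ∀ μ ∈ S, (∀ i, (G.d μ i : ℕ∞) ≤ x0.deg i) ∧ x0.seg 0 (G.d μ) = μ := by
    intro μ hμ
    refine ⟨hdeg_le μ hμ, ?_⟩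
    have h := hseg_eval μ hμ _ (hzf μ hμ) 0 (G.d μ) (pi_zero_le _) le_rfl
    show xseg 0 (G.d μ) = μ
    rw [h, (hzf μ hμ).2]
  -- x0 is a boundary path
  have hbd : G.IsBoundary x0 := by
    intro n hn E hEfin hEex
    obtain ⟨μ, hμ, hnμ⟩ := reach n hn
    have hzμ := hzf μ hμ
    set z := zf μ with hzdef
    set ν := z.1.seg 0 n with hνdef
    have hdν : G.d ν = n := by
      rw [z.1.d_seg 0 n (pi_zero_le n) (cast_le_trans hnμ hzμ.1), pi_sub_zero]
    have hDν : G.DSet μ ⊆ G.DSet ν := by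
      intro w hw
      refine ⟨by rw [hdν]; exact cast_le_trans hnμ hw.1, ?_⟩
      rw [hdν]
      exact DSet_seg_congr hw hzμ (pi_zero_le n) hnμ
    have hνS : ν ∈ S := Filter.mem_of_superset hμ hDν
    have hvv : G.s ν = G.r (x0.seg n n) := by
      have h1 : x0.seg n n = z.1.seg n n := hseg_eval μ hμ z hzμ n n le_rfl hnμ
      rw [h1]
      exact z.1.s_seg 0 n n (pi_zero_le n) le_rfl (cast_le_trans hnμ hzμ.1)
    have hcover : G.DSet ν ⊆ ⋃ c ∈ E, G.DSet (G.comp ν c) := by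
      intro w hw
      have hwn : ∀ i, (n i : ℕ∞) ≤ w.1.deg i := by
        intro i; rw [← hdν]; exact hw.1 i
      have hwseg : w.1.seg 0 n = ν := by rw [← hdν]; exact hw.2
      have hwr : G.r (w.1.seg n n) = G.s ν := by
        rw [← hwseg]
        exact (w.1.s_seg 0 n n (pi_zero_le n) le_rfl hwn).symm
      have hEex' : G.Exhaustive (G.r (w.1.seg n n)) E := by
        rw [hwr.trans hvv]; exact hEex
      obtain ⟨c, hcE, hcdeg, hcseg⟩ := w.2 n hwn E hEfin hEex'
      have hsνc : G.s ν = G.r c := by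
        rw [hEex.1 c hcE]; exact hvv
      have hdcomp : G.d (G.comp ν c) = n + G.d c := by rw [G.d_comp _ _ hsνc, hdν]
      have hcdeg' : ∀ i, ((n + G.d c) i : ℕ∞) ≤ w.1.deg i := fun i => hcdeg i
      refine Set.mem_biUnion hcE ⟨?_, ?_⟩
      · intro i; rw [hdcomp]; exact hcdeg' i
      · rw [hdcomp, w.1.comp_seg 0 n (n + G.d c) (pi_zero_le n)
          (fun i => Nat.le_add_right _ _) hcdeg', hwseg, hcseg]
    have hcup : (⋃ c ∈ E, G.DSet (G.comp ν c)) ∈ U := Filter.mem_of_superset hνS hcover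
    obtain ⟨c, hcE, hcU⟩ := (Ultrafilter.finite_biUnion_mem_iff hEfin).mp hcup
    have hsνc : G.s ν = G.r c := by rw [hEex.1 c hcE]; exact hvv
    have hdcomp : G.d (G.comp ν c) = n + G.d c := by rw [G.d_comp _ _ hsνc, hdν]
    have hτS : G.comp ν c ∈ S := hcU
    refine ⟨c, hcE, ?_, ?_⟩
    · intro i
      have h := hdeg_le _ hτS i
      rw [hdcomp] at h
      exact h
    · have hz' := hzf _ hτS
      have hle1 : n ≤ G.d (G.comp ν c) := by
        rw [hdcomp]; exact fun i => Nat.le_add_right _ _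
      have heval := hseg_eval _ hτS _ hz' n (n + G.d c)
        (fun i => Nat.le_add_right _ _) (le_of_eq hdcomp.symm)
      show xseg n (n + G.d c) = c
      rw [heval]
      set w := zf (G.comp ν c) with hwdef
      have hcs := w.1.comp_seg 0 n (G.d (G.comp ν c)) (pi_zero_le n) hle1 hz'.1
      rw [hz'.2] at hcs
      have hfact := factor_eq (lam := G.comp ν c)
        (w.1.s_seg 0 n _ (pi_zero_le n) hle1 hz'.1) hsνc
        (by rw [w.1.d_seg 0 n (pi_zero_le n) (cast_le_trans hle1 hz'.1), pi_sub_zero, hdν])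
        (by rw [w.1.d_seg n _ hle1 hz'.1, hdcomp]; funext i; simp)
        hcs rfl
      have h2 := hfact.2
      rwa [hdcomp] at h2
  set x : BPath G := ⟨x0, hbd⟩ with hxdef
  have hxm : ∀ μ : G.P, μ ∈ S ↔ x ∈ G.DSet μ := by
    intro μ
    constructor
    · intro hμ; exact hx0mem μ hμ
    · intro hxμ
      obtain ⟨τ, hτ, hle⟩ := reach (G.d μ) hxμ.1
      have hsub : G.DSet τ ⊆ G.DSet μ := by
        intro w hw
        have e1 : w.1.seg 0 (G.d μ) = (zf τ).1.seg 0 (G.d μ) :=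
          DSet_seg_congr hw (hzf τ hτ) (pi_zero_le _) hle
        have e2 : x0.seg 0 (G.d μ) = (zf τ).1.seg 0 (G.d μ) :=
          hseg_eval τ hτ _ (hzf τ hτ) 0 (G.d μ) (pi_zero_le _) hle
        exact ⟨cast_le_trans hle hw.1, (e1.trans e2.symm).trans hxμ.2⟩
      exact Filter.mem_of_superset hτ hsub
  refine ⟨x, (hxm lam0).mp hlamS, ?_⟩
  have hnhds : 𝓝 x = ⨅ s ∈ {s | x ∈ s ∧ s ∈ G.basicSets}, 𝓟 s :=
    TopologicalSpace.nhds_generateFrom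
  rw [hnhds]
  refine le_iInf₂ fun s hs => ?_
  obtain ⟨hxs, ν, F, hFfin, hFr, rfl⟩ := hs
  rw [Filter.le_principal_iff]
  have h1 : G.DSet ν ∈ U := (hxm ν).mpr hxs.1
  have h2 : G.DFSet ν F ∉ U := by
    intro hmem
    rw [DFSet] at hmem
    obtain ⟨c, hcF, hcU⟩ := (Ultrafilter.finite_biUnion_mem_iff hFfin).mp hmem
    exact hxs.2 (mem_DFSet.mpr ⟨c, hcF, (hxm _).mp hcU⟩)
  have h3 := Filter.inter_mem h1 ((Ultrafilter.compl_mem_iff_notMem).mpr h2)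
  rw [Set.diff_eq]
  exact h3

lemma isCompact_DSet (hFA : G.FinitelyAligned) (μ : G.P) : IsCompact (G.DSet μ) := by
  rw [isCompact_iff_ultrafilter_le_nhds]
  intro f hf
  exact ultrafilter_le_nhds hFA f (Filter.le_principal_iff.mp hf)

lemma isCompact_basic (hFA : G.FinitelyAligned) {U : Set (BPath G)}
    (hU : U ∈ G.basicSets) : IsCompact U := by
  obtain ⟨lam, F, hFfin, hFr, rfl⟩ := hU
  refine (isCompact_DSet hFA lam).of_isClosed_subset ?_ Set.diff_subset
  rw [Set.diff_eq]
  exact (isClosed_DSet hFA lam).inter (isOpen_DFSet lam F).isClosed_compl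

lemma basic_inter (hFA : G.FinitelyAligned) {x : BPath G} {s t : Set (BPath G)}
    (hs : s ∈ G.basicSets) (ht : t ∈ G.basicSets) (hxs : x ∈ s) (hxt : x ∈ t) :
    ∃ u ∈ G.basicSets, x ∈ u ∧ u ⊆ s ∩ t := by
  classical
  obtain ⟨a, F, hFfin, hFr, rfl⟩ := hs
  obtain ⟨b, E, hEfin, hEr, rfl⟩ := ht
  have hxa : x ∈ G.DSet a := hxs.1
  have hxb : x ∈ G.DSet b := hxt.1
  set p := G.d a ⊔ G.d b with hpdef
  have hp : ∀ i, (p i : ℕ∞) ≤ x.1.deg i := sup_cast_le hxa.1 hxb.1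
  obtain ⟨hxτ, hdτ⟩ := mem_DSet_initial (z := x) hp
  set τ := x.1.seg 0 p with hτdef
  have hsub : ∀ {c : G.P}, G.d c ≤ p → x ∈ G.DSet c → G.DSet τ ⊆ G.DSet c := by
    intro c hcp hxc w hw
    have hwp : ∀ i, (p i : ℕ∞) ≤ w.1.deg i := by
      intro i; rw [← hdτ]; exact hw.1 i
    have h1 : w.1.seg 0 (G.d c) = x.1.seg 0 (G.d c) :=
      DSet_seg_congr hw hxτ (pi_zero_le _) (by rw [hdτ]; exact hcp)
    exact ⟨cast_le_trans hcp hwp, h1.trans hxc.2⟩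
  have hsa : G.DSet τ ⊆ G.DSet a := hsub le_sup_left hxa
  have hsb : G.DSet τ ⊆ G.DSet b := hsub le_sup_right hxb
  set H : Set G.P := (⋃ c ∈ F, Prod.fst '' G.Lmin τ (G.comp a c)) ∪
    (⋃ c ∈ E, Prod.fst '' G.Lmin τ (G.comp b c)) with hHdef
  have hHfin : H.Finite :=
    Set.Finite.union
      (Set.Finite.biUnion hFfin fun c _ => (hFA _ _).image _)
      (Set.Finite.biUnion hEfin fun c _ => (hFA _ _).image _)
  have hHr : ∀ α ∈ H, G.r α = G.s τ := by
    intro α hα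
    rcases hα with hα | hα
    · obtain ⟨Uc, ⟨c, hU⟩, hαU⟩ := hα
      simp only [Set.mem_iUnion] at hU hαU
      obtain ⟨ab, hab, rfl⟩ := by
        have := hαU
        simp only [← hU] at this
        simp only [Set.mem_iUnion, Set.mem_image] at this
        exact this.2
      exact hab.1.symm
    · obtain ⟨Uc, ⟨c, hU⟩, hαU⟩ := hα
      simp only [Set.mem_iUnion] at hU hαU
      obtain ⟨ab, hab, rfl⟩ := by
        have := hαU
        simp only [← hU] at this
        simp only [Set.mem_iUnion, Set.mem_image] at this
        exact this.2
      exact hab.1.symm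
  refine ⟨G.DSet τ \ G.DFSet τ H, ⟨τ, H, hHfin, hHr, rfl⟩, ⟨hxτ, ?_⟩, ?_⟩
  · -- x ∉ D_{τ H}
    intro hxH
    obtain ⟨α, hαH, hxα⟩ := mem_DFSet.mp hxH
    rcases hαH with hα | hα
    · rw [Set.mem_iUnion₂] at hα
      obtain ⟨c, hcF, ab, hab, rfl⟩ := hα
      have h1 : G.comp τ ab.1 = G.comp (G.comp a c) ab.2 := hab.2.2.1
      rw [h1] at hxα
      exact hxs.2 (mem_DFSet.mpr ⟨c, hcF, DSet_comp_subset_s3 hab.2.1 hxα⟩)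
    · rw [Set.mem_iUnion₂] at hα
      obtain ⟨c, hcE, ab, hab, rfl⟩ := hα
      have h1 : G.comp τ ab.1 = G.comp (G.comp b c) ab.2 := hab.2.2.1
      rw [h1] at hxα
      exact hxt.2 (mem_DFSet.mpr ⟨c, hcE, DSet_comp_subset_s3 hab.2.1 hxα⟩)
  · rintro w ⟨hwτ, hwH⟩
    constructor
    · refine ⟨hsa hwτ, ?_⟩
      intro hwF
      obtain ⟨c, hcF, hwc⟩ := mem_DFSet.mp hwF
      obtain ⟨ab, hab, hwab⟩ := exists_Lmin_of_mem_inter hwτ hwc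
      refine hwH (mem_DFSet.mpr ⟨ab.1, Or.inl ?_, hwab⟩)
      rw [Set.mem_iUnion₂]
      exact ⟨c, hcF, ab, hab, rfl⟩
    · refine ⟨hsb hwτ, ?_⟩
      intro hwE
      obtain ⟨c, hcE, hwc⟩ := mem_DFSet.mp hwE
      obtain ⟨ab, hab, hwab⟩ := exists_Lmin_of_mem_inter hwτ hwc
      refine hwH (mem_DFSet.mpr ⟨ab.1, Or.inr ?_, hwab⟩)
      rw [Set.mem_iUnion₂]
      exact ⟨c, hcE, ab, hab, rfl⟩

lemma nhds_basis_basic (hFA : G.FinitelyAligned) (x : BPath G) :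
    (𝓝 x).HasBasis (fun s => x ∈ s ∧ s ∈ G.basicSets) id := by
  have h0 : 𝓝 x = ⨅ s ∈ {s | x ∈ s ∧ s ∈ G.basicSets}, 𝓟 s :=
    TopologicalSpace.nhds_generateFrom
  rw [h0]
  refine Filter.hasBasis_biInf_principal ?_ ?_
  · rintro s ⟨hxs, hs⟩ t ⟨hxt, ht⟩
    obtain ⟨u, hu, hxu, husub⟩ := basic_inter hFA hs ht hxs hxt
    exact ⟨u, ⟨hxu, hu⟩, husub.trans Set.inter_subset_left,
      husub.trans Set.inter_subset_right⟩
  · have h0 : ∀ i, (((0 : Fin k → ℕ)) i : ℕ∞) ≤ x.1.deg i := fun i => by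
      simp
    obtain ⟨hx0, -⟩ := mem_DSet_initial (z := x) h0
    exact ⟨G.DSet (x.1.seg 0 0), hx0, DSet_mem_basicSets _⟩

lemma locallyCompactSpace_bpath (hFA : G.FinitelyAligned) :
    LocallyCompactSpace (BPath G) := by
  refine ⟨fun x U hU => ?_⟩
  obtain ⟨s, ⟨hxs, hsb⟩, hsU⟩ := (nhds_basis_basic hFA x).mem_iff.mp hU
  exact ⟨s, (isOpen_basic hsb).mem_nhds hxs, hsU, isCompact_basic hFA hsb⟩

end KGraph

/-- `∂Λ^{\not≥ n}` is closed, hence `∂Λ^{≥n}` is an open, locally compact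
subspace of `∂Λ`. -/
theorem stmt3 {k : ℕ} (G : KGraph k) (hFA : G.FinitelyAligned)
    (n : Fin k → ℕ) (hne : (G.geSet n).Nonempty) :
    IsClosed ((G.geSet n)ᶜ) ∧ IsOpen (G.geSet n) ∧
      LocallyCompactSpace (G.geSet n) := by
  have hopen : IsOpen (G.geSet n) := by
    rw [isOpen_iff_forall_mem_open]
    intro x hx
    have hn : ∀ i, (n i : ℕ∞) ≤ x.1.deg i := hx
    obtain ⟨hxm, hdm⟩ := KGraph.mem_DSet_initial (z := x) hn
    refine ⟨G.DSet (x.1.seg 0 n), ?_, KGraph.isOpen_DSet _, hxm⟩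
    intro y hy i
    have h := hy.1 i
    rwa [hdm] at h
  have hlc : LocallyCompactSpace (G.BPath) := KGraph.locallyCompactSpace_bpath hFA
  exact ⟨hopen.isClosed_compl, hopen, hopen.locallyCompactSpace⟩
end

section
/- Let Λ be a finitely-aligned k-graph and m, n ∈ ℕ^k. If ∂Λ^{≥m} and ∂Λ^{≥n} are nonempty but ∂Λ^{≥m+n} is empty, then the balanced tensor product X_m ⊗_{C₀(∂Λ)} X_n is the zero module. -/
open scoped ENNReal ComplexConjugate ZeroAtInfty
open Classical

open scoped CompactlySupported

/-- If `∂Λ^{≥m}` and `∂Λ^{≥n}` are nonempty but `∂Λ^{≥m+n} = ∅`, then the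
balanced tensor product `X_m ⊗_{C₀(∂Λ)} X_n` is zero: the inner product
`⟨f⊗g, f⊗g⟩ = ⟨⟨f,f⟩_m·g, g⟩_n` of every elementary tensor vanishes. -/
theorem stmt6 {k : ℕ} (G : KGraph k) (hFA : G.FinitelyAligned)
    (m n : Fin k → ℕ) (hm : (G.geSet m).Nonempty) (hn : (G.geSet n).Nonempty)
    (hmn : G.geSet (m + n) = ∅)
    (f : C_c(G.geSet m, ℂ)) (g : C_c(G.geSet n, ℂ)) :
    G.innerP n
      (fun y => G.innerP m (G.extFun ⇑f) (G.extFun ⇑f) y * G.extFun ⇑g y)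
      (G.extFun ⇑g) = 0 := by
  funext x
  simp only [KGraph.innerP, Pi.zero_apply]
  rw [← tsum_zero]
  congr 1
  funext yh
  obtain ⟨y, hy⟩ := yh
  have hyn : y ∈ G.geSet n := hy.1
  have hinner : G.innerP m (G.extFun ⇑f) (G.extFun ⇑f) y = 0 := by
    have hE : IsEmpty {z : G.BPath // G.ShiftEq m z y} := by
      constructor
      rintro ⟨z, hz⟩
      have hzmn : z ∈ G.geSet (m + n) := by
        intro i
        have hzm : (m i : ℕ∞) ≤ z.1.deg i := hz.1 i
        have hdeg := hz.2.1 i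
        have hni : (n i : ℕ∞) ≤ z.1.deg i - (m i : ℕ∞) := by
          rw [← hdeg]; exact hyn i
        have hcanc : AddLECancellable (m i : ℕ∞) :=
          WithTop.addLECancellable_of_ne_top (WithTop.coe_ne_top)
        have := (hcanc.le_tsub_iff_left hzm).mp hni
        calc (((m + n) i : ℕ) : ℕ∞) = (m i : ℕ∞) + (n i : ℕ∞) := by
              simp [Pi.add_apply]
          _ ≤ z.1.deg i := this
      rw [hmn] at hzmn
      exact hzmn
    rw [KGraph.innerP]
    exact tsum_empty
  rw [KGraph.innerP] at hinner
  simp only [hinner, zero_mul, map_zero]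
end

section
/- Let Λ be a finitely-aligned k-graph and m ≤ n in ℕ^k. The homomorphisms φ_m: C₀(∂Λ) → 𝓛(X_m) satisfy ker φ_m ⊆ ker φ_n, and consequently the ideal I_n := ⋂_{0 < p ≤ n} ker φ_p equals ⋂_{i : n_i > 0} ker φ_{e_i}. -/
open scoped ENNReal ComplexConjugate ZeroAtInfty
open Classical

theorem Pi.single_one_le_of_pos {ι : Type*} [DecidableEq ι] {p : ι → ℕ} {i : ι}
    (hi : 0 < p i) : Pi.single i 1 ≤ p :=
  update_le_iff.mpr ⟨hi, fun _ _ => zero_le⟩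

theorem KGraph.geSet_antitone {k : ℕ} (G : KGraph k) : Antitone G.geSet :=
  fun _ _ hmm' _ hx i => (Nat.cast_le.mpr (hmm' i)).trans (hx i)

theorem stmt10_general {k : ℕ} (G : KGraph k)
    (n : Fin k → ℕ) :
    (∀ m m' : Fin k → ℕ, m ≤ m' →
      {a : C₀(KGraph.BPath G, ℂ) | ∀ x ∈ G.geSet m, a x = 0} ⊆
        {a : C₀(KGraph.BPath G, ℂ) | ∀ x ∈ G.geSet m', a x = 0}) ∧
    ((⋂ p ∈ {p : Fin k → ℕ | 0 < p ∧ p ≤ n},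
        {a : C₀(KGraph.BPath G, ℂ) | ∀ x ∈ G.geSet p, a x = 0}) =
      ⋂ i ∈ {i : Fin k | 0 < n i},
        {a : C₀(KGraph.BPath G, ℂ) |
          ∀ x ∈ G.geSet (Pi.single i 1), a x = 0}) := by
  have hker : ∀ m m' : Fin k → ℕ, m ≤ m' →
      {a : C₀(KGraph.BPath G, ℂ) | ∀ x ∈ G.geSet m, a x = 0} ⊆
        {a : C₀(KGraph.BPath G, ℂ) | ∀ x ∈ G.geSet m', a x = 0} :=
    fun _ _ hmm' a ha x hx => ha x (G.geSet_antitone hmm' hx)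
  refine ⟨hker, Set.Subset.antisymm ?_ ?_⟩
  · simp only [Set.subset_def, Set.mem_iInter]
    intro a ha i hi
    exact ha (Pi.single i 1) ⟨Pi.single_pos.mpr one_pos, Pi.single_one_le_of_pos hi⟩
  · simp only [Set.subset_def, Set.mem_iInter]
    rintro a ha p ⟨hp, hpn⟩
    obtain ⟨i, hi⟩ := (Pi.lt_def.mp hp).2
    exact hker _ _ (Pi.single_one_le_of_pos hi) (ha i (hi.trans_le (hpn i)))

/-- The kernels `ker φ_p = {a ∈ C₀(∂Λ) : a|_{∂Λ^{≥p}} = 0}` are nested: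
`m ≤ n → ker φ_m ⊆ ker φ_n`; consequently
`I_n = ⋂_{0<p≤n} ker φ_p = ⋂_{i : n_i>0} ker φ_{e_i}`. -/
theorem stmt10 {k : ℕ} (G : KGraph k) (hFA : G.FinitelyAligned)
    (n : Fin k → ℕ) :
    (∀ m m' : Fin k → ℕ, m ≤ m' →
      {a : C₀(KGraph.BPath G, ℂ) | ∀ x ∈ G.geSet m, a x = 0} ⊆
        {a : C₀(KGraph.BPath G, ℂ) | ∀ x ∈ G.geSet m', a x = 0}) ∧
    ((⋂ p ∈ {p : Fin k → ℕ | 0 < p ∧ p ≤ n},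
        {a : C₀(KGraph.BPath G, ℂ) | ∀ x ∈ G.geSet p, a x = 0}) =
      ⋂ i ∈ {i : Fin k | 0 < n i},
        {a : C₀(KGraph.BPath G, ℂ) |
          ∀ x ∈ G.geSet (Pi.single i 1), a x = 0}) :=
  stmt10_general G n
end

section
/- Let Λ be a finitely-aligned k-graph, v ∈ Λ⁰, 𝓕 ⊆ vΛ a finite exhaustive set, n ∈ ℕ^k with n ≥ ⋁_{μ∈𝓕} d(μ), m ≤ n, and (λ,F) a pair with λ ∈ vΛ, d(λ) ≥ m componentwise with d(λ)_i = m_i whenever n_i > m_i, F ⊆ s(λ)Λ finite such that D_λ \ D_{λF} ≠ ∅ and (λ,F) satisfies condition K(i) for every i with n_i > m_i. Then there exists η ∈ 𝓕 such that λ extends η (i.e., λ = η λ' for some λ'). -/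
open scoped ENNReal ComplexConjugate ZeroAtInfty
open Classical

/-! Take a boundary path `x ∈ D_λ \ D_{λF}`. The boundary condition at `0` applied to the finite
exhaustive set `𝓕` gives `η ∈ 𝓕` with `x ∈ D_η`; if `d(η) ≤ d(λ)` then `λ = x(0, d(λ))` extends
`η = x(0, d(η))`. Otherwise `d(λ)_i < d(η)_i ≤ n_i` for some `i`, so `n_i > m_i` and `(λ,F)`
satisfies `K(i)`. Then `x` continues past `λ` in direction `i`, and `K(i)` applied to the next
edge `μ` of `σ_{d(λ)}(x)` gives `ν ∈ F` with `σ_{d(λ)}(x) ∈ D_ν`, i.e. `x ∈ D_{λν} ⊆ D_{λF}`. -/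

lemma ENat.natCast_le_sub_iff {a c : ℕ} {b : ℕ∞} (h : (c : ℕ∞) ≤ b) :
    (a : ℕ∞) ≤ b - c ↔ ((a + c : ℕ) : ℕ∞) ≤ b := by
  rw [Nat.cast_add]
  exact (ENat.addLECancellable_natCast c).le_tsub_iff_right h

namespace KGraph

variable {k : ℕ} {G : KGraph k}

namespace GM

lemma r_seg (x : G.GM) {p q : Fin k → ℕ} (hpq : p ≤ q) (hq : ∀ i, (q i : ℕ∞) ≤ x.deg i) :
    G.r (x.seg p q) = G.r (x.seg p p) := by
  rw [x.comp_seg p p q le_rfl hpq hq, G.r_comp _ _ (x.s_seg p p q le_rfl hpq hq)]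

lemma add_le_deg_of_le_deg_sub (x : G.GM) {p q : Fin k → ℕ} (hp : ∀ i, (p i : ℕ∞) ≤ x.deg i)
    (hq : ∀ i, (q i : ℕ∞) ≤ x.deg i - p i) (i : Fin k) : ((q + p) i : ℕ∞) ≤ x.deg i :=
  (ENat.natCast_le_sub_iff (hp i)).1 (hq i)

def shift (x : G.GM) (p : Fin k → ℕ) (hp : ∀ i, (p i : ℕ∞) ≤ x.deg i) : G.GM where
  deg i := x.deg i - p i
  seg a b := x.seg (a + p) (b + p)
  d_seg a b hab hb := by
    rw [x.d_seg _ _ (add_le_add_left hab p) (x.add_le_deg_of_le_deg_sub hp hb),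
      add_tsub_add_eq_tsub_right]
  comp_seg a b c hab hbc hc := x.comp_seg _ _ _ (add_le_add_left hab p)
    (add_le_add_left hbc p) (x.add_le_deg_of_le_deg_sub hp hc)
  s_seg a b c hab hbc hc := x.s_seg _ _ _ (add_le_add_left hab p)
    (add_le_add_left hbc p) (x.add_le_deg_of_le_deg_sub hp hc)

end GM

lemma IsBoundary.shift {x : G.GM} (hx : G.IsBoundary x) (p : Fin k → ℕ)
    (hp : ∀ i, (p i : ℕ∞) ≤ x.deg i) : G.IsBoundary (x.shift p hp) := by
  intro q hq E hE hex
  obtain ⟨lam, hlamE, hdeg, hseg⟩ :=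
    hx (q + p) (x.add_le_deg_of_le_deg_sub hp hq) E hE hex
  refine ⟨lam, hlamE, fun i => (ENat.natCast_le_sub_iff (hp i)).2 ?_, ?_⟩
  · simpa only [Pi.add_apply, Nat.add_right_comm] using hdeg i
  · simpa only [GM.shift, add_right_comm q p] using hseg

namespace BPath

def shift (x : G.BPath) (p : Fin k → ℕ) (hp : ∀ i, (p i : ℕ∞) ≤ x.1.deg i) : G.BPath :=
  ⟨x.1.shift p hp, x.2.shift p hp⟩

lemma r_seg_zero_of_mem_DSet {x : G.BPath} {lam : G.P} (hx : x ∈ G.DSet lam) :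
    G.r (x.1.seg 0 0) = G.r lam := by
  rw [← hx.2, x.1.r_seg zero_le hx.1]

lemma exists_mem_DSet_of_exhaustive (x : G.BPath) {E : Set G.P} (hE : E.Finite)
    (hex : G.Exhaustive (G.r (x.1.seg 0 0)) E) : ∃ η ∈ E, x ∈ G.DSet η := by
  obtain ⟨η, hηE, hdeg, hseg⟩ := x.2 0 (fun i => by simp) E hE hex
  exact ⟨η, hηE, fun i => by simpa using hdeg i, by simpa using hseg⟩

lemma shift_mem_DSet_seg (x : G.BPath) {p q : Fin k → ℕ} (hpq : p ≤ q)
    (hq : ∀ i, (q i : ℕ∞) ≤ x.1.deg i) :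
    x.shift p (fun i => (Nat.cast_le.2 (hpq i)).trans (hq i)) ∈ G.DSet (x.1.seg p q) := by
  have hd : G.d (x.1.seg p q) + p = q := by
    rw [x.1.d_seg p q hpq hq, tsub_add_cancel_of_le hpq]
  refine ⟨fun i => (ENat.natCast_le_sub_iff ((Nat.cast_le.2 (hpq i)).trans (hq i))).2 ?_, ?_⟩
  · simpa only [← Pi.add_apply, hd] using hq i
  · simp only [shift, GM.shift, zero_add, hd]

lemma mem_DSet_comp_of_shift_mem_DSet {x : G.BPath} {lam ν : G.P} (hx : x ∈ G.DSet lam)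
    (hν : x.shift (G.d lam) hx.1 ∈ G.DSet ν) (hlamν : G.s lam = G.r ν) :
    x ∈ G.DSet (G.comp lam ν) := by
  have hdeg : ∀ i, (((G.d ν + G.d lam) i : ℕ) : ℕ∞) ≤ x.1.deg i :=
    x.1.add_le_deg_of_le_deg_sub hx.1 hν.1
  have hseg : x.1.seg (G.d lam) (G.d ν + G.d lam) = ν := by
    simpa only [shift, GM.shift, zero_add] using hν.2
  refine ⟨?_, ?_⟩ <;> rw [G.d_comp _ _ hlamν, add_comm (G.d lam)]
  · exact hdeg
  · rw [x.1.comp_seg 0 (G.d lam) _ zero_le le_add_self hdeg, hx.2, hseg]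

lemma extends_of_mem_DSet {x : G.BPath} {lam η : G.P} (hlam : x ∈ G.DSet lam)
    (hη : x ∈ G.DSet η) (hle : G.d η ≤ G.d lam) : G.Extends lam η := by
  refine ⟨x.1.seg (G.d η) (G.d lam), ?_, ?_⟩
  · have h := x.1.s_seg 0 _ _ zero_le hle hlam.1
    rwa [hη.2] at h
  · have h := x.1.comp_seg 0 _ _ zero_le hle hlam.1
    rwa [hη.2, hlam.2] at h

end BPath

lemma mem_DFSet_of_conditionK {i : Fin k} {lam : G.P} {F : Set G.P}
    (hK : G.ConditionK i lam F) (hF : ∀ ν ∈ F, G.r ν = G.s lam) {x : G.BPath}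
    (hx : x ∈ G.DSet lam) (hi : (G.d lam i : ℕ∞) < x.1.deg i) : x ∈ G.DFSet lam F := by
  set q := G.d lam + Pi.single i 1
  have hq : ∀ j, (q j : ℕ∞) ≤ x.1.deg j := by
    intro j
    rcases eq_or_ne j i with rfl | hj
    · simpa [q] using ENat.natCast_add_one_le_iff.2 hi
    · simpa [q, hj] using hx.1 j
  have hlq : G.d lam ≤ q := le_self_add
  have hμ := x.shift_mem_DSet_seg hlq hq
  have hrμ : G.r (x.1.seg (G.d lam) q) = G.s lam := by
    rw [← x.1.s_seg 0 _ _ zero_le hlq hq, hx.2]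
  have hdμ : 1 ≤ G.d (x.1.seg (G.d lam) q) i := by
    simp [x.1.d_seg _ _ hlq hq, q]
  obtain ⟨ν, hνF, hμν⟩ := hK _ hrμ hdμ
  exact Set.mem_biUnion hνF
    (BPath.mem_DSet_comp_of_shift_mem_DSet hx (hμν hμ) (hF ν hνF).symm)

end KGraph

theorem stmt11_general {k : ℕ} (G : KGraph k)
    (v : G.V) (𝓕 : Set G.P) (h𝓕fin : 𝓕.Finite) (h𝓕ex : G.Exhaustive v 𝓕)
    (n m : Fin k → ℕ) (hn : ∀ mu ∈ 𝓕, G.d mu ≤ n)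
    (lam : G.P) (hr : G.r lam = v) (F : Set G.P)
    (hFsub : ∀ ν ∈ F, G.r ν = G.s lam) (hdm : m ≤ G.d lam)
    (hdi : ∀ i, m i < n i → G.d lam i = m i ∧ G.ConditionK i lam F)
    (hne : (G.DSet lam \ G.DFSet lam F).Nonempty) :
    ∃ η ∈ 𝓕, G.Extends lam η := by
  obtain ⟨x, hxlam, hxF⟩ := hne
  have hx𝓕 : G.Exhaustive (G.r (x.1.seg 0 0)) 𝓕 := by
    rwa [KGraph.BPath.r_seg_zero_of_mem_DSet hxlam, hr]
  obtain ⟨η, hη𝓕, hxη⟩ := x.exists_mem_DSet_of_exhaustive h𝓕fin hx𝓕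
  refine ⟨η, hη𝓕, KGraph.BPath.extends_of_mem_DSet hxlam hxη fun i => ?_⟩
  by_contra! hi
  have hK : G.ConditionK i lam F := (hdi i ((hdm i).trans_lt (hi.trans_le (hn η hη𝓕 i)))).2
  have hix : (G.d lam i : ℕ∞) < x.1.deg i := (Nat.cast_lt.2 hi).trans_le (hxη.1 i)
  exact hxF (KGraph.mem_DFSet_of_conditionK hK hFsub hxlam hix)

/-- Lemma 4.11 of the paper: if `𝓕 ⊆ vΛ` is finite exhaustive,
`n ≥ ⋁ d(𝓕)`, `m ≤ n`, and `(λ,F)` is a pair with `λ ∈ vΛ`, `d(λ) ≥ m`,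
`d(λ)_i = m_i` and condition `K(i)` whenever `n_i > m_i`, `F ⊆ s(λ)Λ`
finite, and `D_λ \ D_{λF} ≠ ∅`, then `λ` extends some `η ∈ 𝓕`. -/
theorem stmt11 {k : ℕ} (G : KGraph k) (hFA : G.FinitelyAligned)
    (v : G.V) (𝓕 : Set G.P) (h𝓕fin : 𝓕.Finite) (h𝓕ex : G.Exhaustive v 𝓕)
    (n m : Fin k → ℕ) (hn : ∀ mu ∈ 𝓕, G.d mu ≤ n) (hmn : m ≤ n)
    (lam : G.P) (hr : G.r lam = v) (F : Set G.P) (hFfin : F.Finite)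
    (hFsub : ∀ ν ∈ F, G.r ν = G.s lam) (hdm : m ≤ G.d lam)
    (hdi : ∀ i, m i < n i → G.d lam i = m i ∧ G.ConditionK i lam F)
    (hne : (G.DSet lam \ G.DFSet lam F).Nonempty) :
    ∃ η ∈ 𝓕, G.Extends lam η :=
  stmt11_general G v 𝓕 h𝓕fin h𝓕ex n m hn lam hr F hFsub hdm hdi hne
end
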